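/- The minimum over all indices i of S(i+1, i) equals the minimum of bn(M) over all non-crossing matchings M of the full point set having at most one cascade. -/

import Mathlib

noncomputable section

namespace BNC

/-- The Euclidean plane. -/
abbrev Pt : Type := EuclideanSpace ℝ (Fin 2)

/-- Planar cross product (determinant) of two vectors. -/
def cross (u w : Pt) : ℝ := u 0 * w 1 - u 1 * w 0

/-- `v` lists points in strictly convex position in counterclockwise order:
every point distinct from `v i` and `v (i+1)` lies strictly to the left of the
directed line from `v i` to `v (i+1)`.  (This also forces no three of the
points to be collinear.) -/
def ConvexCCW {n : ℕ} (v : ZMod n → Pt) : Prop :=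
  ∀ i j : ZMod n, j ≠ i → j ≠ i + 1 → 0 < cross (v (i + 1) - v i) (v j - v i)

/-- The cyclic arc of indices `i, i+1, …, j` (mod `n`). -/
def arc {n : ℕ} (i j : ZMod n) : Finset (ZMod n) :=
  Finset.image (fun t : ℕ => i + (t : ZMod n)) (Finset.range ((j - i).val + 1))

/-- The turning angle `τ(i,j)`: the sum over `k ∈ ⟨i+1..j−1⟩` of the unsigned
angle between `v (k+1) − v k` and `v k − v (k−1)`. -/
def tau {n : ℕ} (v : ZMod n → Pt) (i j : ZMod n) : ℝ :=
  ∑ k ∈ arc (i + 1) (j - 1),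
    InnerProductGeometry.angle (v (k + 1) - v k) (v k - v (k - 1))

/-- The length of the segment joining the two points of an unordered pair. -/
def pairDist {n : ℕ} (v : ZMod n → Pt) : Sym2 (ZMod n) → ℝ :=
  Sym2.lift ⟨fun a b => dist (v a) (v b), fun a b => dist_comm (v a) (v b)⟩

/-- The closed segment joining the two points of an unordered pair. -/
def pairSeg {n : ℕ} (v : ZMod n → Pt) : Sym2 (ZMod n) → Set Pt :=
  Sym2.lift ⟨fun a b => segment ℝ (v a) (v b), fun a b => segment_symm ℝ (v a) (v b)⟩

/-- `M` is a perfect matching of the index set `A`: a set of non-degenerate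
unordered pairs of indices from `A` such that every index of `A` belongs to
exactly one pair. -/
def IsMatchingOn {n : ℕ} (A : Set (ZMod n)) (M : Set (Sym2 (ZMod n))) : Prop :=
  (∀ e ∈ M, ¬ e.IsDiag) ∧ (∀ e ∈ M, ∀ k, k ∈ e → k ∈ A) ∧
    (∀ k ∈ A, ∃! e, e ∈ M ∧ k ∈ e)

/-- The closed segments of distinct pairs of `M` are pairwise disjoint. -/
def NonCrossing {n : ℕ} (v : ZMod n → Pt) (M : Set (Sym2 (ZMod n))) : Prop :=
  ∀ e ∈ M, ∀ e' ∈ M, e ≠ e' → Disjoint (pairSeg v e) (pairSeg v e')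

/-- The bottleneck value of a matching: the maximal segment length. -/
def bnM {n : ℕ} (v : ZMod n → Pt) (M : Set (Sym2 (ZMod n))) : ℝ :=
  sSup (pairDist v '' M)

/-- A non-crossing perfect matching of the whole point set. -/
def IsNCMatching {n : ℕ} (v : ZMod n → Pt) (M : Set (Sym2 (ZMod n))) : Prop :=
  IsMatchingOn Set.univ M ∧ NonCrossing v M

/-- A bottleneck matching: a non-crossing matching minimizing the bottleneck value. -/
def IsBottleneck {n : ℕ} (v : ZMod n → Pt) (M : Set (Sym2 (ZMod n))) : Prop :=
  IsNCMatching v M ∧ ∀ M', IsNCMatching v M' → bnM v M ≤ bnM v M'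

/-- A pair is an edge of the full polygon iff it is of the form `{k, k+1}`. -/
def IsPolyEdge {n : ℕ} (e : Sym2 (ZMod n)) : Prop := ∃ k : ZMod n, e = s(k, k + 1)

/-- The diagonals of a matching of the full point set. -/
def fullDiags {n : ℕ} (M : Set (Sym2 (ZMod n))) : Set (Sym2 (ZMod n)) :=
  {e ∈ M | ¬ IsPolyEdge e}

/-- The full polygon: the convex hull of all the points. -/
def fullPoly {n : ℕ} (v : ZMod n → Pt) : Set Pt := convexHull ℝ (Set.range v)

/-- The interior of the polygon `Poly` minus the union of the segments of the
diagonals from `D`. -/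
def regionSpace {n : ℕ} (v : ZMod n → Pt) (Poly : Set Pt) (D : Set (Sym2 (ZMod n))) :
    Set Pt :=
  interior Poly \ ⋃ e ∈ D, pairSeg v e

/-- `R` is a region: the closure of a connected component of the interior of the
polygon minus the union of the diagonal segments. -/
def IsRegion {n : ℕ} (v : ZMod n → Pt) (Poly : Set Pt) (D : Set (Sym2 (ZMod n)))
    (R : Set Pt) : Prop :=
  ∃ x ∈ regionSpace v Poly D, R = closure (connectedComponentIn (regionSpace v Poly D) x)

/-- The diagonals from `D` whose segment lies on the boundary of `R`. -/
def boundDiags {n : ℕ} (v : ZMod n → Pt) (Poly : Set Pt) (D : Set (Sym2 (ZMod n)))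
    (R : Set Pt) : Set (Sym2 (ZMod n)) :=
  {e ∈ D | pairSeg v e ⊆ frontier R}

/-- `R` is a region bounded by exactly `k` diagonals. -/
def KBounded {n : ℕ} (v : ZMod n → Pt) (Poly : Set Pt) (D : Set (Sym2 (ZMod n)))
    (R : Set Pt) (k : ℕ) : Prop :=
  IsRegion v Poly D R ∧ (boundDiags v Poly D R).ncard = k

/-- The graph whose vertices are the diagonals of `D`, two being adjacent iff
some 2-bounded region has both on its boundary. -/
def cascadeGraph {n : ℕ} (v : ZMod n → Pt) (Poly : Set Pt) (D : Set (Sym2 (ZMod n))) :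
    SimpleGraph D where
  Adj a b := a ≠ b ∧ ∃ R : Set Pt, KBounded v Poly D R 2 ∧
      pairSeg v a.1 ⊆ frontier R ∧ pairSeg v b.1 ⊆ frontier R
  symm := by
    constructor
    rintro a b ⟨hab, R, h1, h2, h3⟩
    exact ⟨hab.symm, R, h1, h3, h2⟩
  loopless := by constructor; rintro a ⟨h, -⟩; exact h rfl

/-- The number of cascades: the number of connected components of the cascade graph. -/
def cascadeCount {n : ℕ} (v : ZMod n → Pt) (Poly : Set Pt) (D : Set (Sym2 (ZMod n))) : ℕ :=
  Nat.card (cascadeGraph v Poly D).ConnectedComponent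

/-- A pair is a diagonal relative to the arc `⟨i..j⟩` iff it is neither `{i,j}`
nor of the form `{k, k+1}` with both `k` and `k+1` in the arc. -/
def ArcDiag {n : ℕ} (i j : ZMod n) (e : Sym2 (ZMod n)) : Prop :=
  e ≠ s(i, j) ∧ ∀ k : ZMod n, k ∈ arc i j → k + 1 ∈ arc i j → e ≠ s(k, k + 1)

/-- The convex hull of the points of the arc `⟨i..j⟩`. -/
def arcPoly {n : ℕ} (v : ZMod n → Pt) (i j : ZMod n) : Set Pt :=
  convexHull ℝ (v '' (arc i j : Set (ZMod n)))

/-- The diagonals (relative to the arc `⟨i..j⟩`) of a matching `M`. -/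
def arcDiags {n : ℕ} (i j : ZMod n) (M : Set (Sym2 (ZMod n))) : Set (Sym2 (ZMod n)) :=
  {e ∈ M | ArcDiag i j e}

/-- `M` is admissible for the subproblem `Matching(i,j)`: it is a non-crossing
perfect matching of the points of the arc `⟨i..j⟩`, it has at most one cascade,
and any region whose boundary contains the segment `[v i, v j]` has at most one
diagonal of `M` on its boundary. -/
def Admissible {n : ℕ} (v : ZMod n → Pt) (i j : ZMod n) (M : Set (Sym2 (ZMod n))) : Prop :=
  IsMatchingOn (↑(arc i j)) M ∧ NonCrossing v M ∧
    cascadeCount v (arcPoly v i j) (arcDiags i j M) ≤ 1 ∧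
    ∀ R : Set Pt, IsRegion v (arcPoly v i j) (arcDiags i j M) R →
      segment ℝ (v i) (v j) ⊆ frontier R →
      (boundDiags v (arcPoly v i j) (arcDiags i j M) R).ncard ≤ 1

/-- `S i j`: the optimal value of the subproblem `Matching(i,j)`. -/
def S {n : ℕ} (v : ZMod n → Pt) (i j : ZMod n) : ℝ :=
  sInf (bnM v '' {M | Admissible v i j M})

/-- The pair `(i,j)` is necessary: every admissible matching attaining `S i j`
contains the pair `{i,j}`. -/
def Necessary {n : ℕ} (v : ZMod n → Pt) (i j : ZMod n) : Prop :=
  ∀ M : Set (Sym2 (ZMod n)), Admissible v i j M → bnM v M = S v i j → s(i, j) ∈ M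

/-- The closed right side of the directed line from `v i` to `v j`. -/
def rightClosed {n : ℕ} (v : ZMod n → Pt) (i j : ZMod n) : Set Pt :=
  {P : Pt | cross (v j - v i) (P - v i) ≤ 0}

/-- The region `Π⁺(i,j)`. -/
def PiPlus {n : ℕ} (v : ZMod n → Pt) (i j : ZMod n) : Set Pt :=
  {P ∈ rightClosed v i j |
    Real.pi / 3 ≤ EuclideanGeometry.angle (v i) P (v j) ∧ dist (v i) (v j) ≤ dist P (v i)}

/-- The region `Π⁻(i,j)`. -/
def PiMinus {n : ℕ} (v : ZMod n → Pt) (i j : ZMod n) : Set Pt :=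
  {P ∈ rightClosed v i j |
    Real.pi / 3 ≤ EuclideanGeometry.angle (v i) P (v j) ∧ dist (v i) (v j) ≤ dist P (v j)}

/-- `(i,j)` is a feasible pair: the arc `⟨i..j⟩` has an even number of points. -/
def Feasible {n : ℕ} (i j : ZMod n) : Prop := Even (arc i j).card

/-- `(i,j)` is a diagonal pair (not an edge, not degenerate). -/
def IsDiagPair {n : ℕ} (i j : ZMod n) : Prop := i ≠ j ∧ j ≠ i + 1 ∧ i ≠ j + 1

/-- `(i,j)` is a candidate diagonal: a feasible diagonal that is necessary and
whose turning angle is at most `2π/3`. -/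
def Candidate {n : ℕ} (v : ZMod n → Pt) (i j : ZMod n) : Prop :=
  Feasible i j ∧ IsDiagPair i j ∧ Necessary v i j ∧ tau v i j ≤ 2 * Real.pi / 3

end BNC

/-!
For the whole index set, `Matching(i + 1, i)` asks for a non-crossing matching with at most one
cascade whose regions at the polygon edge `[v (i + 1), v i]` meet at most one diagonal. So each
`S(i + 1, i)` is an infimum over part of the right-hand side, taken over a nonempty set thanks to
the matching by every other polygon edge. Conversely every such matching is admissible for some
edge: choose a diagonal `{a, b}` of minimal cyclic length `b - a`. No other diagonal has an
endpoint strictly inside `⟨a..b⟩` (it would be shorter, or cross `{a, b}`), so all other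
diagonals lie strictly beyond the line `v a v b`, while the region at the edge `[v (a + 1), v a]`
stays on the near side of that line.
-/

open Set

theorem csInf_iUnion {α ι : Type*} [ConditionallyCompleteLattice α] [Nonempty ι]
    {A : ι → Set α} (hne : ∀ i, (A i).Nonempty) (hbdd : BddBelow (⋃ i, A i)) :
    sInf (⋃ i, A i) = ⨅ i, sInf (A i) := by
  obtain ⟨b, hb⟩ := hbdd
  have hbi : ∀ i, b ≤ sInf (A i) := fun i =>
    le_csInf (hne i) fun x hx => hb (mem_iUnion_of_mem i hx)
  apply le_antisymm
  · exact le_ciInf fun i => csInf_le_csInf ⟨b, hb⟩ (hne i) (subset_iUnion A i)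
  · refine le_csInf ((hne (Classical.arbitrary ι)).mono (subset_iUnion A _)) fun x hx => ?_
    obtain ⟨i, hi⟩ := mem_iUnion.1 hx
    exact (ciInf_le ⟨b, forall_mem_range.2 hbi⟩ i).trans
      (csInf_le ⟨b, fun y hy => hb (mem_iUnion_of_mem i hy)⟩ hi)

theorem IsPreconnected.closure_subset_nonpos {X : Type*} [TopologicalSpace X] {C : Set X}
    (hC : IsPreconnected C) {f : X → ℝ} (hf : Continuous f) (hf0 : ∀ x ∈ C, f x ≠ 0)
    {m : X} (hm : m ∈ closure C) (hfm : f m < 0) : closure C ⊆ {x | f x ≤ 0} := by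
  have hneg : C ⊆ {x | f x < 0} :=
    hC.subset_left_of_subset_union (isOpen_lt hf continuous_const)
      (isOpen_lt continuous_const hf) (disjoint_left.2 fun _ hx hx' => lt_asymm (α := ℝ) hx hx')
      (fun x hx => (hf0 x hx).lt_or_gt)
      ((mem_closure_iff.1 hm _ (isOpen_lt hf continuous_const) hfm).mono fun _ h => ⟨h.2, h.1⟩)
  exact (closure_mono hneg).trans (closure_lt_subset_le hf continuous_const)

namespace ZMod

theorem natCast_ne_natCast_of_lt {n s t : ℕ} (hs : s < n) (ht : t < n) (hst : s ≠ t) :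
    (s : ZMod n) ≠ t := fun h => hst <| by
  simpa [val_cast_of_lt hs, val_cast_of_lt ht] using congrArg val h

theorem val_sub_pos_iff {n : ℕ} [NeZero n] {a b : ZMod n} : 0 < (b - a).val ↔ b ≠ a := by
  rw [Nat.pos_iff_ne_zero, val_ne_zero, sub_ne_zero]

theorem val_sub_sub_of_le {n : ℕ} [NeZero n] {a c x : ZMod n} (h : (c - a).val ≤ (x - a).val) :
    (x - c).val = (x - a).val - (c - a).val := by
  rw [← val_sub h, sub_sub_sub_cancel_right]

end ZMod

namespace BNC

section Cross

theorem cross_antisymm (u w : Pt) : cross u w = -cross w u := by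
  simp only [cross]; ring

theorem cross_smul_right (u w : Pt) (k : ℝ) : cross u (k • w) = k * cross u w := by
  simp only [cross, PiLp.smul_apply, smul_eq_mul]; ring

theorem cross_self (u : Pt) : cross u u = 0 := by
  simp only [cross]; ring

theorem cross_zero_left (w : Pt) : cross 0 w = 0 := by
  simp [cross]

theorem cross_zero_right (u : Pt) : cross u 0 = 0 := by
  simp [cross]

theorem cross_sub_sub_rotate (p q r : Pt) : cross (q - p) (r - p) = cross (r - q) (p - q) := by
  simp only [cross, PiLp.sub_apply]; ring

theorem cross_add_smul_sub (u b x y : Pt) (t : ℝ) :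
    cross u (x + t • (y - x) - b) =
      cross u (x - b) + t * (cross u (y - b) - cross u (x - b)) := by
  simp only [cross, PiLp.add_apply, PiLp.sub_apply, PiLp.smul_apply, smul_eq_mul]; ring

theorem cross_add_add_sub (u b x y : Pt) {s t : ℝ} (hst : s + t = 1) :
    cross u (s • x + t • y - b) = s * cross u (x - b) + t * cross u (y - b) := by
  obtain rfl : s = 1 - t := by linarith
  simp only [cross, PiLp.add_apply, PiLp.sub_apply, PiLp.smul_apply, smul_eq_mul]; ring

theorem continuous_cross_sub (u b : Pt) : Continuous fun P : Pt => cross u (P - b) := by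
  unfold cross; fun_prop

theorem cross_pos_trans {w p q r : Pt} (hp : 0 < cross w p) (hq : 0 < cross w q)
    (hr : 0 < cross w r) (hpq : 0 < cross p q) (hqr : 0 < cross q r) : 0 < cross p r := by
  have plucker : cross w q * cross p r = cross w p * cross q r + cross w r * cross p q := by
    simp only [cross]; ring
  nlinarith [mul_pos hp hqr, mul_pos hr hpq]

theorem exists_eq_smul_of_cross_eq_zero {u w : Pt} (hu : u ≠ 0) (h : cross u w = 0) :
    ∃ k : ℝ, w = k • u := by
  have hcz : u 0 * w 1 = u 1 * w 0 := by simp only [cross] at h; linarith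
  have hnorm : 0 < u 0 ^ 2 + u 1 ^ 2 := by
    by_contra! hc
    apply hu
    ext i
    fin_cases i <;> simp <;> nlinarith [sq_nonneg (u 0), sq_nonneg (u 1)]
  refine ⟨(w 0 * u 0 + w 1 * u 1) / (u 0 ^ 2 + u 1 ^ 2), ?_⟩
  ext i
  fin_cases i <;> simp only [Fin.zero_eta, Fin.mk_one, PiLp.smul_apply, smul_eq_mul] <;>
    field_simp
  · linear_combination (-u 1) * hcz
  · linear_combination u 0 * hcz

theorem not_disjoint_segment_of_cross {p₁ p₂ q₁ q₂ : Pt}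
    (h₁ : cross (p₂ - p₁) (q₁ - p₁) < 0) (h₂ : 0 < cross (p₂ - p₁) (q₂ - p₁))
    (h₃ : 0 < cross (q₂ - q₁) (p₁ - q₁)) (h₄ : cross (q₂ - q₁) (p₂ - q₁) < 0) :
    ¬ Disjoint (segment ℝ p₁ p₂) (segment ℝ q₁ q₂) := by
  have hp : p₂ - p₁ ≠ 0 := fun h => by rw [h, cross_zero_left] at h₁; exact h₁.false
  set f₁ := cross (p₂ - p₁) (q₁ - p₁)
  set f₂ := cross (p₂ - p₁) (q₂ - p₁)
  set t := -f₁ / (f₂ - f₁)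
  have ht : t ∈ Icc (0 : ℝ) 1 :=
    ⟨div_nonneg (by linarith) (by linarith), (div_le_one (by linarith)).2 (by linarith)⟩
  set z := q₁ + t • (q₂ - q₁)
  have hzp : cross (p₂ - p₁) (z - p₁) = 0 := by
    rw [cross_add_smul_sub]
    have : f₂ - f₁ ≠ 0 := by linarith
    simp only [t]; field_simp; ring
  obtain ⟨k, hk⟩ := exists_eq_smul_of_cross_eq_zero hp hzp
  have hzk : z = p₁ + k • (p₂ - p₁) := by rw [← hk]; abel
  have hzq : cross (q₂ - q₁) (z - q₁) = 0 := by
    rw [add_sub_cancel_left, cross_smul_right, cross_self, mul_zero]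
  rw [hzk, cross_add_smul_sub] at hzq
  have hk01 : k ∈ Icc (0 : ℝ) 1 := ⟨by nlinarith, by nlinarith⟩
  rw [not_disjoint_iff]
  refine ⟨z, ?_, ?_⟩
  · rw [segment_eq_image']; exact ⟨k, hk01, hzk.symm⟩
  · rw [segment_eq_image']; exact ⟨t, ht, rfl⟩

end Cross

section ConvexPolygon

variable {n : ℕ} {v : ZMod n → Pt}

namespace ConvexCCW

theorem cross_pos_one (hv : ConvexCCW v) (a : ZMod n) {t : ℕ} (ht : 2 ≤ t) (htn : t < n) :
    0 < cross (v (a + (1 : ℕ)) - v a) (v (a + t) - v a) := by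
  have h0 := (add_right_injective a).ne (ZMod.natCast_ne_natCast_of_lt (t := 0) htn (by omega)
    (by omega))
  have h1 := (add_right_injective a).ne (ZMod.natCast_ne_natCast_of_lt (t := 1) htn (by omega)
    (by omega))
  simp only [Nat.cast_zero, add_zero, Nat.cast_one] at h0 h1 ⊢
  exact hv a _ h0 h1

theorem cross_pos_succ (hv : ConvexCCW v) (a : ZMod n) {s : ℕ} (hs : 0 < s) (hsn : s + 1 < n) :
    0 < cross (v (a + s) - v a) (v (a + (s + 1 : ℕ)) - v a) := by
  have h0 := (add_right_injective a).ne (ZMod.natCast_ne_natCast_of_lt (s := 0) (t := s)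
    (by omega) (by omega) (by omega))
  have h1 := (add_right_injective a).ne (ZMod.natCast_ne_natCast_of_lt (s := 0) (by omega) hsn
    (by omega))
  simp only [Nat.cast_zero, add_zero, Nat.cast_succ, ← add_assoc] at h0 h1 ⊢
  rw [cross_sub_sub_rotate]
  exact hv _ a h0 h1

theorem cross_pos_of_lt (hv : ConvexCCW v) (a : ZMod n) {s t : ℕ} (hs : 0 < s) (hst : s < t)
    (ht : t < n) : 0 < cross (v (a + s) - v a) (v (a + t) - v a) := by
  obtain rfl | hs1 := (show 1 ≤ s from hs).eq_or_lt
  · exact hv.cross_pos_one a hst ht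
  induction t, hst using Nat.le_induction with
  | base => exact hv.cross_pos_succ a hs ht
  | succ t hst ih =>
    exact cross_pos_trans (hv.cross_pos_one a hs1 (by omega)) (hv.cross_pos_one a (by omega)
      (by omega)) (hv.cross_pos_one a (by omega) ht) (ih (by omega))
      (hv.cross_pos_succ a (by omega) ht)

theorem cross_pos_of_val_lt [NeZero n] (hv : ConvexCCW v) {a p q : ZMod n} (hp : 0 < (p - a).val)
    (hpq : (p - a).val < (q - a).val) : 0 < cross (v p - v a) (v q - v a) := by
  simpa only [ZMod.natCast_zmod_val, add_sub_cancel] using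
    hv.cross_pos_of_lt a hp hpq (ZMod.val_lt _)

theorem not_disjoint_segment [NeZero n] (hv : ConvexCCW v) {a b c x : ZMod n}
    (hc : 0 < (c - a).val) (hcb : (c - a).val < (b - a).val) (hbx : (b - a).val < (x - a).val) :
    ¬ Disjoint (segment ℝ (v a) (v b)) (segment ℝ (v c) (v x)) := by
  have hbc := ZMod.val_sub_sub_of_le hcb.le
  have hxc := ZMod.val_sub_sub_of_le (hcb.trans hbx).le
  have hac : (a - c).val = n - (c - a).val := by
    rw [← neg_sub, ZMod.neg_val, if_neg fun h => by simp [h] at hc]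
  have hxn := ZMod.val_lt (x - a)
  apply not_disjoint_segment_of_cross
  · rw [cross_antisymm, neg_neg_iff_pos]
    exact hv.cross_pos_of_val_lt hc hcb
  · exact hv.cross_pos_of_val_lt (hc.trans hcb) hbx
  · exact hv.cross_pos_of_val_lt (by omega) (by omega)
  · rw [cross_antisymm, neg_neg_iff_pos]
    exact hv.cross_pos_of_val_lt (by omega) (by omega)

theorem disjoint_segment_edge (hv : ConvexCCW v) {p q : ZMod n} (h₁ : q ≠ p)
    (h₂ : q ≠ p + 1) (h₃ : q + 1 ≠ p) (h₄ : q + 1 ≠ p + 1) :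
    Disjoint (segment ℝ (v p) (v (p + 1))) (segment ℝ (v q) (v (q + 1))) := by
  rw [disjoint_left]
  rintro _ hzp hzq
  rw [segment_eq_image'] at hzp hzq
  obtain ⟨s, -, rfl⟩ := hzp
  obtain ⟨t, ⟨ht₀, ht₁⟩, hz⟩ := hzq
  have hline := congrArg (fun z => cross (v (p + 1) - v p) (z - v p)) hz
  simp only [cross_add_smul_sub, sub_self, cross_zero_right, cross_self] at hline
  have hA := hv p q h₁ h₂
  have hB := hv p (q + 1) h₃ h₄
  nlinarith [mul_pos hA hB, mul_nonneg ht₀ hB.le, mul_nonneg (sub_nonneg.2 ht₁) hA.le]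

theorem cross_nonneg_of_mem_fullPoly (hv : ConvexCCW v) (a : ZMod n) {P : Pt}
    (hP : P ∈ fullPoly v) : 0 ≤ cross (v (a + 1) - v a) (P - v a) := by
  refine convexHull_min (t := {Q : Pt | 0 ≤ cross (v (a + 1) - v a) (Q - v a)}) ?_
    (fun x hx y hy s t hs ht hst => ?_) hP
  · rintro _ ⟨j, rfl⟩
    rw [mem_ofPred_eq]
    by_cases hj : j = a
    · rw [hj, sub_self, cross_zero_right]
    by_cases hj1 : j = a + 1
    · rw [hj1, cross_self]
    exact (hv a j hj hj1).le
  · simp only [mem_ofPred_eq, cross_add_add_sub _ _ _ _ hst] at hx hy ⊢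
    positivity

theorem mem_segment_of_cross_eq_zero (hv : ConvexCCW v) {a b : ZMod n} (hab : IsDiagPair a b)
    {P : Pt} (hP : P ∈ fullPoly v) (hPab : cross (v b - v a) (P - v a) = 0) :
    P ∈ segment ℝ (v a) (v b) := by
  obtain ⟨hab, hba1, hab1⟩ := hab
  have ha : 0 < cross (v (a + 1) - v a) (v b - v a) := hv a b (Ne.symm hab) hba1
  have hb : 0 < cross (v (b + 1) - v b) (v a - v b) := hv b a hab hab1
  have hba : v b - v a ≠ 0 := fun h => by rw [h, cross_zero_right] at ha; exact ha.false
  obtain ⟨k, hk⟩ := exists_eq_smul_of_cross_eq_zero hba hPab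
  have hPb : P - v b = (1 - k) • (v a - v b) := by
    rw [sub_smul, one_smul, ← neg_sub (v b) (v a), smul_neg, ← hk]; abel
  have hka := hv.cross_nonneg_of_mem_fullPoly a hP
  have hkb := hv.cross_nonneg_of_mem_fullPoly b hP
  rw [hk, cross_smul_right] at hka
  rw [hPb, cross_smul_right] at hkb
  rw [segment_eq_image']
  refine ⟨k, ⟨nonneg_of_mul_nonneg_left (by linarith) ha, by nlinarith⟩, ?_⟩
  show v a + k • (v b - v a) = P
  rw [← hk]; abel

end ConvexCCW

end ConvexPolygon

section Regions

variable {n : ℕ} {v : ZMod n → Pt}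

def EdgeRegionsAtMostOneBounded (v : ZMod n → Pt) (D : Set (Sym2 (ZMod n))) (i : ZMod n) :
    Prop :=
  ∀ R : Set Pt, IsRegion v (fullPoly v) D R → segment ℝ (v (i + 1)) (v i) ⊆ frontier R →
    (boundDiags v (fullPoly v) D R).ncard ≤ 1

theorem edgeRegionsAtMostOneBounded_empty (i : ZMod n) :
    EdgeRegionsAtMostOneBounded v ∅ i := fun R _ _ => by
  simp [boundDiags]

/-- The region at the edge `[v (a + 1), v a]` stays on the side of the line `v a v b` containing
`v (a + 1)`, so it cannot reach diagonals lying strictly on the other side. -/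
theorem ConvexCCW.boundDiags_subset_singleton (hv : ConvexCCW v) {D : Set (Sym2 (ZMod n))}
    {a b : ZMod n} (hab : IsDiagPair a b) (habD : s(a, b) ∈ D)
    (hfar : ∀ e ∈ D, e ≠ s(a, b) → ∀ c ∈ e, 0 < cross (v b - v a) (v c - v a))
    {R : Set Pt} (hR : IsRegion v (fullPoly v) D R)
    (hedge : segment ℝ (v (a + 1)) (v a) ⊆ frontier R) :
    boundDiags v (fullPoly v) D R ⊆ {s(a, b)} := by
  obtain ⟨x₀, -, rfl⟩ := hR
  set C := connectedComponentIn (regionSpace v (fullPoly v) D) x₀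
  have hfront : frontier (closure C) ⊆ closure C := isClosed_closure.frontier_subset
  have hC0 : ∀ P ∈ C, cross (v b - v a) (P - v a) ≠ 0 := fun P hP h0 =>
    have hPU := connectedComponentIn_subset _ _ hP
    hPU.2 (mem_biUnion habD (hv.mem_segment_of_cross_eq_zero hab (interior_subset hPU.1) h0))
  have hside : 0 < cross (v (a + 1) - v a) (v b - v a) := hv a b (Ne.symm hab.1) hab.2.1
  have hnonpos := isPreconnected_connectedComponentIn.closure_subset_nonpos
    (continuous_cross_sub _ _) hC0 (hfront (hedge (left_mem_segment ℝ _ _)))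
    (by rw [cross_antisymm, neg_neg_iff_pos]; exact hside)
  rintro e ⟨he, heR⟩
  by_contra hne
  induction e using Sym2.ind with
  | _ c x =>
    exact (hfar _ he hne c (Sym2.mem_mk_left c x)).not_ge
      (hnonpos (hfront (heR (left_mem_segment ℝ _ _))))

/-- A diagonal with an endpoint strictly inside `⟨a..b⟩` would either be shorter than `{a, b}`
or cross it. -/
theorem ConvexCCW.val_lt_of_shortest [NeZero n] (hv : ConvexCCW v) {D : Set (Sym2 (ZMod n))}
    (hD : NonCrossing v D) {a b : ZMod n} (habD : s(a, b) ∈ D)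
    (hmin : ∀ c x, s(c, x) ∈ D → (b - a).val ≤ (x - c).val) {c x : ZMod n}
    (hcxD : s(c, x) ∈ D) (hne : s(c, x) ≠ s(a, b)) : (b - a).val < (c - a).val := by
  have hdis : Disjoint (segment ℝ (v a) (v b)) (segment ℝ (v c) (v x)) :=
    hD _ habD _ hcxD (Ne.symm hne)
  have hca : c ≠ a := by
    rintro rfl; exact hdis.ne_of_mem (left_mem_segment ℝ _ _) (left_mem_segment ℝ _ _) rfl
  have hcb : c ≠ b := by
    rintro rfl; exact hdis.ne_of_mem (right_mem_segment ℝ _ _) (left_mem_segment ℝ _ _) rfl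
  have hxb : x ≠ b := by
    rintro rfl; exact hdis.ne_of_mem (right_mem_segment ℝ _ _) (right_mem_segment ℝ _ _) rfl
  have hval : ∀ {p q : ZMod n}, (p - a).val = (q - a).val → p = q := fun h =>
    sub_left_inj.1 (ZMod.val_injective n h)
  have hc0 : 0 < (c - a).val := ZMod.val_sub_pos_iff.2 hca
  by_contra! hle
  have hcb' : (c - a).val < (b - a).val := lt_of_le_of_ne hle fun h => hcb (hval h)
  rcases lt_trichotomy (x - a).val (b - a).val with hx | hx | hx
  · rcases le_total (c - a).val (x - a).val with h | h
    · have := hmin c x hcxD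
      rw [ZMod.val_sub_sub_of_le h] at this
      omega
    · have := hmin x c (Sym2.eq_swap ▸ hcxD)
      rw [ZMod.val_sub_sub_of_le h] at this
      omega
  · exact hxb (hval hx)
  · exact hv.not_disjoint_segment hc0 hcb' hx hdis

end Regions

section Matchings

variable {n : ℕ} {v : ZMod n → Pt}

theorem NonCrossing.mono {M M' : Set (Sym2 (ZMod n))} (hM : NonCrossing v M) (h : M' ⊆ M) :
    NonCrossing v M' := fun e he e' he' => hM e (h he) e' (h he')

theorem isDiagPair_of_mem_fullDiags {M : Set (Sym2 (ZMod n))} (hM : IsMatchingOn univ M)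
    {a b : ZMod n} (hab : s(a, b) ∈ fullDiags M) : IsDiagPair a b :=
  ⟨fun h => hM.1 _ hab.1 (Sym2.mk_isDiag_iff.2 h), fun h => hab.2 ⟨a, by rw [h]⟩,
    fun h => hab.2 ⟨b, by rw [h, Sym2.eq_swap]⟩⟩

theorem ConvexCCW.exists_edgeRegionsAtMostOneBounded [NeZero n] (hv : ConvexCCW v)
    {M : Set (Sym2 (ZMod n))} (hM : IsNCMatching v M) :
    ∃ i, EdgeRegionsAtMostOneBounded v (fullDiags M) i := by
  rcases (fullDiags M).eq_empty_or_nonempty with hD | ⟨e, he⟩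
  · exact ⟨0, hD ▸ edgeRegionsAtMostOneBounded_empty 0⟩
  obtain ⟨⟨a, b⟩, habD, hmin⟩ := exists_min_image
    {p : ZMod n × ZMod n | s(p.1, p.2) ∈ fullDiags M} (fun p => (p.2 - p.1).val) (toFinite _)
    (by induction e using Sym2.ind with | _ c x => exact ⟨(c, x), he⟩)
  have hab := isDiagPair_of_mem_fullDiags hM.1 habD
  have hD : NonCrossing v (fullDiags M) := hM.2.mono fun _ he => he.1
  have hfar : ∀ e ∈ fullDiags M, e ≠ s(a, b) → ∀ c ∈ e,
      0 < cross (v b - v a) (v c - v a) := by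
    intro e he hne c hc
    obtain ⟨x, rfl⟩ := Sym2.mem_iff_exists.1 hc
    exact hv.cross_pos_of_val_lt (ZMod.val_sub_pos_iff.2 (Ne.symm hab.1))
      (hv.val_lt_of_shortest hD habD (fun c x hcx => hmin (c, x) hcx) he hne)
  refine ⟨a, fun R hR hedge => ?_⟩
  calc (boundDiags v (fullPoly v) (fullDiags M) R).ncard
      ≤ ({s(a, b)} : Set (Sym2 (ZMod n))).ncard :=
        ncard_le_ncard (hv.boundDiags_subset_singleton hab habD hfar hR hedge)
          (finite_singleton _)
    _ = 1 := ncard_singleton _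

theorem arc_add_one_self [NeZero n] (i : ZMod n) : arc (i + 1) i = Finset.univ := by
  have hn := Nat.pos_of_neZero n
  have hval : (i - (i + 1)).val = n - 1 := by
    rw [show i - (i + 1) = ((n - 1 : ℕ) : ZMod n) by
      rw [Nat.cast_sub hn, ZMod.natCast_self, Nat.cast_one]; ring]
    exact ZMod.val_cast_of_lt (by omega)
  refine Finset.eq_univ_of_forall fun z => Finset.mem_image.2
    ⟨(z - (i + 1)).val, Finset.mem_range.2 ?_, by rw [ZMod.natCast_zmod_val, add_sub_cancel]⟩
  have := ZMod.val_lt (z - (i + 1))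
  omega

theorem admissible_add_one_self_iff [NeZero n] {i : ZMod n} {M : Set (Sym2 (ZMod n))} :
    Admissible v (i + 1) i M ↔ (IsNCMatching v M ∧
      cascadeCount v (fullPoly v) (fullDiags M) ≤ 1) ∧
      EdgeRegionsAtMostOneBounded v (fullDiags M) i := by
  have hD : arcDiags (i + 1) i M = fullDiags M := by
    ext e
    simp only [arcDiags, fullDiags, ArcDiag, IsPolyEdge, arc_add_one_self, Finset.mem_univ,
      true_implies, mem_ofPred_eq]
    exact and_congr_right fun _ => ⟨fun h ⟨k, hk⟩ => h.2 k hk,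
      fun h => ⟨fun hi => h ⟨i, hi.trans Sym2.eq_swap⟩, fun k hk => h ⟨k, hk⟩⟩⟩
  simp only [Admissible, IsNCMatching, EdgeRegionsAtMostOneBounded, arcPoly, fullPoly,
    arc_add_one_self, Finset.coe_univ, image_univ, hD, and_assoc]

theorem bnM_nonneg (M : Set (Sym2 (ZMod n))) : 0 ≤ bnM v M :=
  Real.sSup_nonneg <| by
    rintro _ ⟨e, -, rfl⟩
    induction e using Sym2.ind with | _ a b => exact (dist_nonneg : 0 ≤ dist (v a) (v b))

theorem cascadeCount_empty (P : Set Pt) : cascadeCount v P ∅ = 0 := by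
  simp [cascadeCount]

def evenEdges (n : ℕ) : Set (Sym2 (ZMod n)) :=
  {e | ∃ m : ℕ, 2 * m + 1 < n ∧ e = s(((2 * m : ℕ) : ZMod n), ((2 * m + 1 : ℕ) : ZMod n))}

theorem mem_evenEdge_iff [NeZero n] {m : ℕ} (hm : 2 * m + 1 < n) {k : ZMod n} :
    k ∈ s(((2 * m : ℕ) : ZMod n), ((2 * m + 1 : ℕ) : ZMod n)) ↔ k.val / 2 = m := by
  have hcast : ∀ t < n, k = (t : ZMod n) ↔ k.val = t := fun t ht =>
    ⟨by rintro rfl; exact ZMod.val_cast_of_lt ht, fun h => by rw [← h, ZMod.natCast_zmod_val]⟩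
  rw [Sym2.mem_iff, hcast _ (by omega), hcast _ hm]
  omega

theorem isMatchingOn_evenEdges [NeZero n] (hn : Even n) : IsMatchingOn univ (evenEdges n) := by
  refine ⟨?_, fun _ _ k _ => mem_univ k, fun k _ => ?_⟩
  · rintro _ ⟨m, hm, rfl⟩ h
    exact ZMod.natCast_ne_natCast_of_lt (by omega) hm (by omega) (Sym2.mk_isDiag_iff.1 h)
  have hk : 2 * (k.val / 2) + 1 < n := by
    obtain ⟨r, rfl⟩ := hn
    have := ZMod.val_lt k
    omega
  refine ⟨_, ⟨⟨k.val / 2, hk, rfl⟩, (mem_evenEdge_iff hk).2 rfl⟩, ?_⟩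
  rintro _ ⟨⟨m, hm, rfl⟩, hkm⟩
  rw [(mem_evenEdge_iff hm).1 hkm]

theorem ConvexCCW.nonCrossing_evenEdges (hv : ConvexCCW v) : NonCrossing v (evenEdges n) := by
  rintro _ ⟨m, hm, rfl⟩ _ ⟨m', hm', rfl⟩ hne
  have hmm' : m ≠ m' := by rintro rfl; exact hne rfl
  have hcast : ∀ s t : ℕ, s < n → t < n → s ≠ t → (s : ZMod n) ≠ t :=
    fun _ _ => ZMod.natCast_ne_natCast_of_lt
  have := hv.disjoint_segment_edge (p := ((2 * m : ℕ) : ZMod n)) (q := ((2 * m' : ℕ) : ZMod n))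
    (hcast _ _ (by omega) (by omega) (by omega))
    (by rw [← Nat.cast_succ]; exact hcast _ _ (by omega) (by omega) (by omega))
    (by rw [← Nat.cast_succ]; exact hcast _ _ (by omega) (by omega) (by omega))
    (by rw [← Nat.cast_succ, ← Nat.cast_succ]; exact hcast _ _ (by omega) (by omega) (by omega))
  rwa [← Nat.cast_succ, ← Nat.cast_succ] at this

theorem fullDiags_evenEdges : fullDiags (evenEdges n) = ∅ := by
  refine eq_empty_of_forall_notMem ?_
  rintro _ ⟨⟨m, hm, rfl⟩, h⟩
  exact h ⟨_, by rw [Nat.cast_succ]⟩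

theorem ConvexCCW.admissible_evenEdges [NeZero n] (hv : ConvexCCW v) (hn : Even n) (i : ZMod n) :
    Admissible v (i + 1) i (evenEdges n) := by
  refine admissible_add_one_self_iff.2
    ⟨⟨⟨isMatchingOn_evenEdges hn, hv.nonCrossing_evenEdges⟩, ?_⟩, ?_⟩
  · rw [fullDiags_evenEdges, cascadeCount_empty]; exact zero_le_one
  · rw [fullDiags_evenEdges]; exact edgeRegionsAtMostOneBounded_empty i

end Matchings

end BNC

theorem stmt8_general (n : ℕ) [NeZero n] (hEven : Even n)
    (v : ZMod n → BNC.Pt) (hv : BNC.ConvexCCW v) :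
    sInf {x : ℝ | ∃ i : ZMod n, x = BNC.S v (i + 1) i} =
      sInf {x : ℝ | ∃ M : Set (Sym2 (ZMod n)), BNC.IsNCMatching v M ∧
        BNC.cascadeCount v (BNC.fullPoly v) (BNC.fullDiags M) ≤ 1 ∧ x = BNC.bnM v M} := by
  have hvalues : {x : ℝ | ∃ M : Set (Sym2 (ZMod n)), BNC.IsNCMatching v M ∧
      BNC.cascadeCount v (BNC.fullPoly v) (BNC.fullDiags M) ≤ 1 ∧ x = BNC.bnM v M} =
      ⋃ i : ZMod n, BNC.bnM v '' {M | BNC.Admissible v (i + 1) i M} := by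
    ext x
    simp only [mem_ofPred_eq, mem_iUnion, mem_image, BNC.admissible_add_one_self_iff]
    constructor
    · rintro ⟨M, hM, hcas, rfl⟩
      obtain ⟨i, hi⟩ := hv.exists_edgeRegionsAtMostOneBounded hM
      exact ⟨i, M, ⟨⟨hM, hcas⟩, hi⟩, rfl⟩
    · rintro ⟨i, M, ⟨⟨hM, hcas⟩, -⟩, rfl⟩
      exact ⟨M, hM, hcas, rfl⟩
  have hS : {x : ℝ | ∃ i : ZMod n, x = BNC.S v (i + 1) i} =
      range fun i => BNC.S v (i + 1) i := by
    ext x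
    exact exists_congr fun i => eq_comm
  have hne : ∀ i : ZMod n, (BNC.bnM v '' {M | BNC.Admissible v (i + 1) i M}).Nonempty :=
    fun i => ⟨_, _, hv.admissible_evenEdges hEven i, rfl⟩
  have hbdd : BddBelow (⋃ i : ZMod n, BNC.bnM v '' {M | BNC.Admissible v (i + 1) i M}) := by
    refine ⟨0, fun x hx => ?_⟩
    obtain ⟨i, M, -, rfl⟩ := mem_iUnion.1 hx
    exact BNC.bnM_nonneg M
  rw [hvalues, hS, csInf_iUnion hne hbdd]
  rfl

/-- The minimum over all `i` of `S(i+1, i)` equals the minimum bottleneck value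
over all non-crossing matchings of the full point set with at most one cascade. -/
theorem stmt8 (n : ℕ) [NeZero n] (hn : 4 ≤ n) (hEven : Even n)
    (v : ZMod n → BNC.Pt) (hv : BNC.ConvexCCW v) :
    sInf {x : ℝ | ∃ i : ZMod n, x = BNC.S v (i + 1) i} =
      sInf {x : ℝ | ∃ M : Set (Sym2 (ZMod n)), BNC.IsNCMatching v M ∧
        BNC.cascadeCount v (BNC.fullPoly v) (BNC.fullDiags M) ≤ 1 ∧ x = BNC.bnM v M} :=
  stmt8_general n hEven v hv
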